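/- arXiv:1902.09448 — 3 statements merged into one kernel-verified Lean document; each statement's English description precedes it below -/
import Mathlib

section
/- For every real number s with e^s + e^{-s} ≤ 4, one has ln((e^s + e^{-s} + 2)/4) ≤ (1/2)·((e^s + e^{-s})/2 − 1) ≤ (1/2)·s². -/
lemma sinh_le_mul_cosh (t : ℝ) (ht : 0 ≤ t) : Real.sinh t ≤ t * Real.cosh t := by
  refine hasSum_le (fun n => ?_) (Real.hasSum_sinh t) ((Real.hasSum_cosh t).mul_left t)
  have h1 : t ^ (2 * n + 1) = t * t ^ (2 * n) := by ring
  have hf : ((2*n).factorial : ℝ) ≤ ((2*n+1).factorial : ℝ) := by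
    exact_mod_cast Nat.factorial_le (by omega)
  rw [h1, mul_div_assoc]
  gcongr

lemma cosh_sub_one_le (s : ℝ) (h : Real.cosh s ≤ 2) : Real.cosh s - 1 ≤ s ^ 2 := by
  set u := |s| / 2 with hu
  have hu0 : 0 ≤ u := by positivity
  have hid : Real.cosh s = Real.cosh u ^ 2 + Real.sinh u ^ 2 := by
    rw [← Real.cosh_abs s, show |s| = 2 * u by rw [hu]; ring]
    exact Real.cosh_two_mul u
  have hsq : Real.cosh u ^ 2 = Real.sinh u ^ 2 + 1 := Real.cosh_sq u
  have hsinh : Real.sinh u ≤ u * Real.cosh u := sinh_le_mul_cosh u hu0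
  have hsinh0 : 0 ≤ Real.sinh u := Real.sinh_nonneg_iff.mpr hu0
  have hcosh2 : Real.cosh u ^ 2 ≤ 3 / 2 := by nlinarith
  have habs : u ^ 2 = s ^ 2 / 4 := by
    rw [hu, div_pow, sq_abs]; norm_num
  nlinarith [sq_nonneg (Real.sinh u - u * Real.cosh u), sq_nonneg s]

theorem log_cosh_quotient_le_of_le_four (s : ℝ)
    (hs : Real.exp s + Real.exp (-s) ≤ 4) :
    Real.log ((Real.exp s + Real.exp (-s) + 2) / 4) ≤
      (1 / 2) * ((Real.exp s + Real.exp (-s)) / 2 - 1) ∧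
    (1 / 2) * ((Real.exp s + Real.exp (-s)) / 2 - 1) ≤ (1 / 2) * s ^ 2 := by
  have hc : Real.exp s + Real.exp (-s) = 2 * Real.cosh s := by
    rw [Real.cosh_eq]; ring
  constructor
  · have hpos : 0 < (Real.exp s + Real.exp (-s) + 2) / 4 := by positivity
    have := Real.log_le_sub_one_of_pos hpos
    linarith
  · have h2 : Real.cosh s ≤ 2 := by linarith [hc ▸ hs]
    have := cosh_sub_one_le s h2
    rw [hc]
    nlinarith
end

section
/- Special case of the Gagliardo–Nirenberg inequality: there exists a constant C > 0 such that for every f ∈ C_c^∞(ℝ²), ‖f‖_{L²(ℝ²)}² ≤ C·‖∇f‖_{L²(ℝ²)}·‖f‖_{L¹(ℝ²)}. -/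
open MeasureTheory
open scoped NNReal ENNReal

theorem gagliardo_nirenberg_special_case :
    ∃ C : ℝ, 0 < C ∧
      ∀ f : EuclideanSpace ℝ (Fin 2) → ℝ,
        ContDiff ℝ (⊤ : ℕ∞) f → HasCompactSupport f →
        (∫ x, (f x) ^ 2) ≤
          C * Real.sqrt (∫ x, ‖fderiv ℝ f x‖ ^ 2) * (∫ x, |f x|) := by
  
  classical
  set c₀ : ℝ := (eLpNormLESNormFDerivOneConst
      (volume : Measure (EuclideanSpace ℝ (Fin 2))) 2 : ℝ) with hc₀def
  have hc₀0 : 0 ≤ c₀ := (eLpNormLESNormFDerivOneConst _ 2).coe_nonneg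
  set K : ℝ := max (2 * c₀) 1 with hKdef
  have hK0 : (0:ℝ) < K := lt_of_lt_of_le one_pos (le_max_right _ _)
  refine ⟨K, hK0, ?_⟩
  intro f hf h2f
  have hfc : Continuous f := hf.continuous
  have hdf_cont : Continuous (fderiv ℝ f) := hf.continuous_fderiv (by simp)
  have hdf_supp : HasCompactSupport (fderiv ℝ f) := h2f.fderiv ℝ
  -- the auxiliary function g = f^2
  set g : EuclideanSpace ℝ (Fin 2) → ℝ := fun x => f x * f x with hgdef
  have hg1 : ContDiff ℝ 1 g := (hf.mul hf).of_le (by simp)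
  have hg2 : HasCompactSupport g := h2f.mul_right
  have hdg : ∀ x, fderiv ℝ g x = (2 * f x) • fderiv ℝ f x := by
    intro x
    have hdx : DifferentiableAt ℝ f x := (hf.differentiable (by simp)).differentiableAt
    rw [hgdef, fderiv_fun_mul hdx hdx, ← add_smul, two_mul]
  have hndg : ∀ x, ‖fderiv ℝ g x‖ = 2 * (|f x| * ‖fderiv ℝ f x‖) := by
    intro x
    rw [hdg x, norm_smul]
    simp [abs_mul, Real.norm_eq_abs, mul_assoc]
  -- Sobolev inequality for g
  have hfr : ((Module.finrank ℝ (EuclideanSpace ℝ (Fin 2)) : ℕ) : ℝ≥0) = 2 := by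
    rw [finrank_euclideanSpace, Fintype.card_fin]
    norm_num
  have hp : NNReal.HolderConjugate
      ((Module.finrank ℝ (EuclideanSpace ℝ (Fin 2)) : ℕ) : ℝ≥0) 2 := by
    rw [hfr]
    exact NNReal.holderConjugate_iff.mpr ⟨one_lt_two, by rw [← two_mul]; exact mul_inv_cancel₀ two_ne_zero⟩
  have sob := eLpNorm_le_eLpNorm_fderiv_one
    (volume : Measure (EuclideanSpace ℝ (Fin 2))) hg1 hg2 hp
  simp only [ENNReal.coe_ofNat, NNReal.coe_ofNat] at sob
  have mem_g : MemLp g 2 volume := hg1.continuous.memLp_of_hasCompactSupport hg2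
  have mem_dg : MemLp (fderiv ℝ g) 1 volume :=
    (hg1.continuous_fderiv one_ne_zero).memLp_of_hasCompactSupport (hg2.fderiv ℝ)
  have hL : eLpNorm g 2 volume
      = ENNReal.ofReal ((∫ x, f x ^ 4) ^ ((2:ℝ)⁻¹)) := by
    rw [mem_g.eLpNorm_eq_integral_rpow_norm two_ne_zero ENNReal.ofNat_ne_top]
    have hint : (∫ x, ‖g x‖ ^ (2:ℝ≥0∞).toReal) = ∫ x, f x ^ 4 := by
      refine integral_congr_ae (Filter.Eventually.of_forall fun x => ?_)
      beta_reduce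
      have h1 : ‖g x‖ = |f x| ^ 2 := by
        simp [hgdef, abs_mul, sq]
      rw [ENNReal.toReal_ofNat, h1, Real.rpow_two, ← pow_mul,
        show 2*2 = 4 from rfl, pow_abs, abs_of_nonneg (by positivity : (0:ℝ) ≤ f x ^ 4)]
    rw [hint, ENNReal.toReal_ofNat]
  have hR : eLpNorm (fderiv ℝ g) 1 volume
      = ENNReal.ofReal (∫ x, ‖fderiv ℝ g x‖) := by
    rw [mem_dg.eLpNorm_eq_integral_rpow_norm one_ne_zero ENNReal.one_ne_top]
    simp
  have key1 : (∫ x, f x ^ 4) ^ ((2:ℝ)⁻¹) ≤ c₀ * ∫ x, ‖fderiv ℝ g x‖ := by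
    rw [hL, hR] at sob
    have hir : Integrable (fun x => ‖fderiv ℝ g x‖) volume :=
      ((hg1.continuous_fderiv one_ne_zero).norm).integrable_of_hasCompactSupport
        ((hg2.fderiv ℝ).norm)
    have h1 : (eLpNormLESNormFDerivOneConst
        (volume : Measure (EuclideanSpace ℝ (Fin 2))) 2 : ℝ≥0∞)
        = ENNReal.ofReal c₀ := by
      rw [hc₀def, ENNReal.ofReal_coe_nnreal]
    rw [h1, ← ENNReal.ofReal_mul hc₀0] at sob
    have := (ENNReal.ofReal_le_ofReal_iff (by positivity)).mp sob
    exact this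
  -- Cauchy-Schwarz
  have CS : (∫ x, ‖fderiv ℝ g x‖)
      ≤ 2 * ((∫ x, f x ^ 2) ^ ((2:ℝ)⁻¹) * (∫ x, ‖fderiv ℝ f x‖ ^ 2) ^ ((2:ℝ)⁻¹)) := by
    have hpq : Real.HolderConjugate 2 2 := Real.holderConjugate_iff.mpr ⟨one_lt_two, by norm_num⟩
    have mf : MemLp (fun x => |f x|) (ENNReal.ofReal 2) volume := by
      exact (hfc.abs).memLp_of_hasCompactSupport (h2f.abs)
    have mdf : MemLp (fun x => ‖fderiv ℝ f x‖) (ENNReal.ofReal 2) volume :=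
      (hdf_cont.norm).memLp_of_hasCompactSupport (hdf_supp.norm)
    have h := integral_mul_le_Lp_mul_Lq_of_nonneg hpq
      (Filter.Eventually.of_forall fun x => abs_nonneg (f x))
      (Filter.Eventually.of_forall fun x => norm_nonneg (fderiv ℝ f x))
      mf mdf
    have e0 : (∫ x, ‖fderiv ℝ g x‖) = 2 * ∫ x, |f x| * ‖fderiv ℝ f x‖ := by
      rw [← integral_const_mul]
      exact integral_congr_ae (Filter.Eventually.of_forall fun x => hndg x)
    have e1 : (∫ x, |f x| ^ (2:ℝ)) = ∫ x, f x ^ 2 := by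
      refine integral_congr_ae (Filter.Eventually.of_forall fun x => ?_)
      beta_reduce
      rw [Real.rpow_two, sq_abs]
    have e2 : (∫ x, ‖fderiv ℝ f x‖ ^ (2:ℝ)) = ∫ x, ‖fderiv ℝ f x‖ ^ 2 := by
      refine integral_congr_ae (Filter.Eventually.of_forall fun x => ?_)
      beta_reduce
      rw [Real.rpow_two]
    rw [e0]
    rw [e1, e2] at h
    have h12 : (1:ℝ)/2 = (2:ℝ)⁻¹ := by norm_num
    rw [h12] at h
    nlinarith [h]
  -- Hölder interpolation
  have hold : (∫ x, f x ^ 2)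
      ≤ (∫ x, |f x|) ^ ((2:ℝ)/3) * (∫ x, f x ^ 4) ^ ((3:ℝ)⁻¹) := by
    have hpq : Real.HolderConjugate (3/2) 3 := Real.holderConjugate_iff.mpr ⟨by norm_num, by norm_num⟩
    have cf1 : Continuous fun x => |f x| ^ ((2:ℝ)/3) :=
      (hfc.abs).rpow_const fun x => Or.inr (by norm_num)
    have cf2 : Continuous fun x => |f x| ^ ((4:ℝ)/3) :=
      (hfc.abs).rpow_const fun x => Or.inr (by norm_num)
    have s1 : HasCompactSupport fun x => |f x| ^ ((2:ℝ)/3) :=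
      h2f.comp_left (g := fun y : ℝ => |y| ^ ((2:ℝ)/3)) (by beta_reduce; rw [abs_zero, Real.zero_rpow (by norm_num)])
    have s2 : HasCompactSupport fun x => |f x| ^ ((4:ℝ)/3) :=
      h2f.comp_left (g := fun y : ℝ => |y| ^ ((4:ℝ)/3))
        (by beta_reduce; rw [abs_zero, Real.zero_rpow (by norm_num)])
    have m1 : MemLp (fun x => |f x| ^ ((2:ℝ)/3)) (ENNReal.ofReal (3/2)) volume :=
      cf1.memLp_of_hasCompactSupport s1
    have m2 : MemLp (fun x => |f x| ^ ((4:ℝ)/3)) (ENNReal.ofReal 3) volume :=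
      cf2.memLp_of_hasCompactSupport s2
    have h := integral_mul_le_Lp_mul_Lq_of_nonneg hpq
      (Filter.Eventually.of_forall fun x => Real.rpow_nonneg (abs_nonneg (f x)) _)
      (Filter.Eventually.of_forall fun x => Real.rpow_nonneg (abs_nonneg (f x)) _)
      m1 m2
    have e0 : (∫ x, |f x| ^ ((2:ℝ)/3) * |f x| ^ ((4:ℝ)/3)) = ∫ x, f x ^ 2 := by
      refine integral_congr_ae (Filter.Eventually.of_forall fun x => ?_)
      beta_reduce
      rw [← Real.rpow_add' (abs_nonneg _) (by norm_num),
        show (2:ℝ)/3 + (4:ℝ)/3 = 2 by norm_num, Real.rpow_two, sq_abs]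
    have e1 : (∫ x, (|f x| ^ ((2:ℝ)/3)) ^ ((3:ℝ)/2)) = ∫ x, |f x| := by
      refine integral_congr_ae (Filter.Eventually.of_forall fun x => ?_)
      beta_reduce
      rw [← Real.rpow_mul (abs_nonneg _)]
      norm_num
    have e2 : (∫ x, (|f x| ^ ((4:ℝ)/3)) ^ (3:ℝ)) = ∫ x, f x ^ 4 := by
      refine integral_congr_ae (Filter.Eventually.of_forall fun x => ?_)
      beta_reduce
      rw [← Real.rpow_mul (abs_nonneg _), show (4:ℝ)/3*3 = ((4:ℕ):ℝ) by norm_num,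
        Real.rpow_natCast, pow_abs, abs_of_nonneg (by positivity)]
    rw [e0, e1, e2] at h
    have h1 : (1:ℝ)/(3/2) = (2:ℝ)/3 := by norm_num
    have h2 : (1:ℝ)/3 = (3:ℝ)⁻¹ := by norm_num
    rw [h1, h2] at h
    exact h
  -- combine everything
  set a := ∫ x, f x ^ 2 with hadef
  set b := ∫ x, |f x| with hbdef
  set q := ∫ x, f x ^ 4 with hqdef
  set e := ∫ x, ‖fderiv ℝ f x‖ ^ 2 with hedef
  have ha : 0 ≤ a := integral_nonneg fun x => sq_nonneg _
  have hb : 0 ≤ b := integral_nonneg fun x => abs_nonneg _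
  have hq : 0 ≤ q := integral_nonneg fun x => by positivity
  have he : 0 ≤ e := integral_nonneg fun x => sq_nonneg _
  set d := Real.sqrt e with hddef
  have hd : 0 ≤ d := Real.sqrt_nonneg _
  have hde : e ^ ((2:ℝ)⁻¹) = d := by
    rw [hddef, Real.sqrt_eq_rpow]
    norm_num
  -- main quantitative bound: q^(1/2) ≤ K * (a^(1/2) * d)
  have hQ : q ^ ((2:ℝ)⁻¹) ≤ K * (a ^ ((2:ℝ)⁻¹) * d) := by
    have h2c : 2 * c₀ ≤ K := le_max_left _ _
    calc q ^ ((2:ℝ)⁻¹) ≤ c₀ * ∫ x, ‖fderiv ℝ g x‖ := key1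
      _ ≤ c₀ * (2 * (a ^ ((2:ℝ)⁻¹) * e ^ ((2:ℝ)⁻¹))) := by
          exact mul_le_mul_of_nonneg_left CS hc₀0
      _ = (2 * c₀) * (a ^ ((2:ℝ)⁻¹) * d) := by rw [hde]; ring
      _ ≤ K * (a ^ ((2:ℝ)⁻¹) * d) := by
          apply mul_le_mul_of_nonneg_right h2c
          positivity
  -- finish
  rcases eq_or_lt_of_le ha with ha0 | ha0
  · rw [← ha0]
    positivity
  · -- a > 0
    have hM : 0 ≤ K * d * b := by positivity
    have step : a ≤ (K * d * b) ^ ((2:ℝ)/3) * a ^ ((3:ℝ)⁻¹) := by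
      have hq13 : q ^ ((3:ℝ)⁻¹) = (q ^ ((2:ℝ)⁻¹)) ^ ((2:ℝ)/3) := by
        rw [← Real.rpow_mul hq]; norm_num
      have mono : (q ^ ((2:ℝ)⁻¹)) ^ ((2:ℝ)/3) ≤ (K * (a ^ ((2:ℝ)⁻¹) * d)) ^ ((2:ℝ)/3) :=
        Real.rpow_le_rpow (Real.rpow_nonneg hq _) hQ (by norm_num)
      have expand : (K * (a ^ ((2:ℝ)⁻¹) * d)) ^ ((2:ℝ)/3)
          = (K * d) ^ ((2:ℝ)/3) * a ^ ((3:ℝ)⁻¹) := by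
        rw [show K * (a ^ ((2:ℝ)⁻¹) * d) = (K * d) * a ^ ((2:ℝ)⁻¹) by ring,
          Real.mul_rpow (by positivity) (Real.rpow_nonneg ha _),
          ← Real.rpow_mul ha]
        norm_num
      calc a ≤ b ^ ((2:ℝ)/3) * q ^ ((3:ℝ)⁻¹) := hold
        _ ≤ b ^ ((2:ℝ)/3) * ((K * d) ^ ((2:ℝ)/3) * a ^ ((3:ℝ)⁻¹)) := by
            rw [hq13]
            exact mul_le_mul_of_nonneg_left (le_trans mono (le_of_eq expand))
              (Real.rpow_nonneg hb _)
        _ = (K * d * b) ^ ((2:ℝ)/3) * a ^ ((3:ℝ)⁻¹) := by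
            rw [show K * d * b = b * (K * d) by ring,
              Real.mul_rpow hb (by positivity)]
            ring
    -- a = a^(2/3) * a^(1/3), cancel
    have hsplit : a = a ^ ((2:ℝ)/3) * a ^ ((3:ℝ)⁻¹) := by
      rw [← Real.rpow_add ha0]
      norm_num
    have h13pos : 0 < a ^ ((3:ℝ)⁻¹) := Real.rpow_pos_of_pos ha0 _
    have hfin : a ^ ((2:ℝ)/3) ≤ (K * d * b) ^ ((2:ℝ)/3) := by
      have := step
      rw [hsplit] at this
      exact le_of_mul_le_mul_right (by linarith [this]) h13pos
    have : a ≤ K * d * b := by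
      have h32 : (a ^ ((2:ℝ)/3)) ^ ((3:ℝ)/2) ≤ ((K * d * b) ^ ((2:ℝ)/3)) ^ ((3:ℝ)/2) :=
        Real.rpow_le_rpow (Real.rpow_nonneg ha _) hfin (by norm_num)
      rwa [← Real.rpow_mul ha, ← Real.rpow_mul hM, show ((2:ℝ)/3) * ((3:ℝ)/2) = 1 by norm_num,
        Real.rpow_one, Real.rpow_one] at h32
    exact this
end

section
/- Suppose w : ℝ² → ℝ is a nonnegative C² function with w(x) → 0 as |x| → ∞ and Δw ≥ μ·w outside a ball of radius R, where μ > 0. Then for every ε ∈ (0,1) there is a constant C(ε) > 0 with w(x) ≤ C(ε)·e^{−√μ(1−ε)|x|} for all |x| > R. -/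
open Filter Topology RealInnerProductSpace

section Helpers

/-- Second derivative test: at a local max, second derivative is ≤ 0. -/
lemma second_deriv_nonpos_of_isLocalMax {g : ℝ → ℝ}
    (hdiff : ∀ᶠ t in nhds (0:ℝ), DifferentiableAt ℝ g t)
    (hdiff2 : DifferentiableAt ℝ (deriv g) 0)
    (hmax : IsLocalMax g 0) : deriv (deriv g) 0 ≤ 0 := by
  by_contra h
  push_neg at h
  have h0 : deriv g 0 = 0 := hmax.deriv_eq_zero
  have hslope : Filter.Tendsto (fun t => (deriv g t - deriv g 0) / (t - 0))
      (nhdsWithin 0 {(0:ℝ)}ᶜ) (nhds (deriv (deriv g) 0)) := by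
    have h2 := hasDerivAt_iff_tendsto_slope.mp hdiff2.hasDerivAt
    rw [Filter.tendsto_congr (fun t => slope_def_field (deriv g) 0 t)] at h2
    exact h2
  have hpos : ∀ᶠ t in nhdsWithin (0:ℝ) {(0:ℝ)}ᶜ, 0 < (deriv g t - deriv g 0) / (t - 0) :=
    hslope.eventually (eventually_gt_nhds h)
  obtain ⟨δ₁, hδ₁, hδ₁'⟩ := Metric.mem_nhdsWithin_iff.mp hpos
  obtain ⟨δ₂, hδ₂, hδ₂'⟩ := Metric.eventually_nhds_iff.mp hdiff
  obtain ⟨δ₃, hδ₃, hδ₃'⟩ := Metric.eventually_nhds_iff.mp hmax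
  set δ := min δ₁ (min δ₂ δ₃) with hδdef
  have hle1 : δ ≤ δ₁ := min_le_left _ _
  have hle2 : δ ≤ δ₂ := le_trans (min_le_right _ _) (min_le_left _ _)
  have hle3 : δ ≤ δ₃ := le_trans (min_le_right _ _) (min_le_right _ _)
  have hδ : 0 < δ := lt_min hδ₁ (lt_min hδ₂ hδ₃)
  have hderivpos : ∀ t ∈ Set.Ioo (0:ℝ) δ, 0 < deriv g t := by
    intro t ht
    have habs : dist t 0 < δ₁ := by
      rw [Real.dist_eq, sub_zero, abs_of_pos ht.1]
      linarith [ht.2]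
    have h3 := hδ₁' ⟨Metric.mem_ball.mpr habs, by simp [ne_of_gt ht.1]⟩
    simp only [Set.mem_setOf_eq, h0, sub_zero] at h3
    rcases div_pos_iff.mp h3 with h4 | h4
    · exact h4.1
    · exact absurd ht.1 (not_lt.mpr h4.2.le)
  have hmono : StrictMonoOn g (Set.Icc 0 (δ/2)) := by
    apply strictMonoOn_of_deriv_pos (convex_Icc _ _)
    · intro t ht
      refine (hδ₂' ?_).continuousAt.continuousWithinAt
      rw [Real.dist_eq, sub_zero, abs_of_nonneg ht.1]
      linarith [ht.2]
    · intro t ht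
      rw [interior_Icc] at ht
      exact hderivpos t ⟨ht.1, lt_of_lt_of_le ht.2 (by linarith)⟩
  have h1 : g 0 < g (δ/2) :=
    hmono (by constructor <;> linarith) (by constructor <;> linarith) (by linarith)
  have h2 : g (δ/2) ≤ g 0 := by
    refine hδ₃' ?_
    rw [Real.dist_eq, sub_zero, abs_of_pos (by linarith)]
    linarith
  linarith

/-- Derivative computations for `φ t = exp (-(a √(c² + 2bt + t²)))`. -/
lemma phi_second_deriv (a b c : ℝ) (hc : 0 < c) :
    (∀ᶠ t in nhds (0:ℝ), DifferentiableAt ℝ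
        (fun t => Real.exp (-(a * Real.sqrt (c^2 + 2*b*t + t^2)))) t) ∧
    DifferentiableAt ℝ
        (deriv (fun t => Real.exp (-(a * Real.sqrt (c^2 + 2*b*t + t^2))))) 0 ∧
    deriv (deriv (fun t => Real.exp (-(a * Real.sqrt (c^2 + 2*b*t + t^2))))) 0
      = (a^2 * b^2 / c^2 - a * (c^2 - b^2) / c^3) * Real.exp (-(a*c)) := by
  set q : ℝ → ℝ := fun t => c^2 + 2*b*t + t^2 with hqdef
  set φ : ℝ → ℝ := fun t => Real.exp (-(a * Real.sqrt (q t))) with hφdef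
  have hq : ∀ t, HasDerivAt q (2*b + 2*t) t := by
    intro t
    have h1 : HasDerivAt (fun t : ℝ => c^2 + 2*b*t + t^2) (0 + 2*b*1 + 2*t^1) t :=
      (((hasDerivAt_const t (c^2)).add ((hasDerivAt_id t).const_mul (2*b))).add
        (hasDerivAt_pow 2 t))
    simpa using h1.congr_deriv (by ring)
  have hq0 : q 0 = c^2 := by simp [hqdef]
  have hsq0 : Real.sqrt (q 0) = c := by rw [hq0, Real.sqrt_sq hc.le]
  have hU : ∀ᶠ t in nhds (0:ℝ), 0 < q t := by
    have hqc : Continuous q := by fun_prop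
    have := hqc.continuousAt (x := 0)
    exact this.eventually (by rw [hq0]; exact eventually_gt_nhds (by positivity))
  set φ' : ℝ → ℝ := fun t => -(a * ((2*b + 2*t)/(2*Real.sqrt (q t)))) * φ t with hφ'def
  have key : ∀ t, 0 < q t → HasDerivAt φ (φ' t) t := by
    intro t ht
    have hs : HasDerivAt (fun u => Real.sqrt (q u)) (1/(2*Real.sqrt (q t)) * (2*b+2*t)) t :=
      (Real.hasDerivAt_sqrt (ne_of_gt ht)).comp t (hq t)
    have h2 : HasDerivAt (fun u => -(a * Real.sqrt (q u)))
        (-(a * (1/(2*Real.sqrt (q t)) * (2*b+2*t)))) t := (hs.const_mul a).neg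
    have h3 := h2.exp
    refine h3.congr_deriv ?_
    simp only [hφ'def, hφdef]
    ring
  have hφdiff : ∀ᶠ t in nhds (0:ℝ), DifferentiableAt ℝ φ t :=
    hU.mono fun t ht => (key t ht).differentiableAt
  have hev : deriv φ =ᶠ[nhds (0:ℝ)] φ' := hU.mono fun t ht => (key t ht).deriv
  have hsqpos : (0:ℝ) < Real.sqrt (q 0) := by rw [hsq0]; exact hc
  have hs0 : HasDerivAt (fun u => Real.sqrt (q u)) (1/(2*c) * (2*b)) 0 := by
    have := (Real.hasDerivAt_sqrt (by rw [hq0]; positivity)).comp 0 (hq 0)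
    simpa [hsq0, Function.comp_def] using this
  have hnum : HasDerivAt (fun t : ℝ => 2*b + 2*t) 2 0 := by
    simpa using ((hasDerivAt_id (0:ℝ)).const_mul 2).const_add (2*b)
  have hden : HasDerivAt (fun t => 2*Real.sqrt (q t)) (2*(1/(2*c)*(2*b))) 0 :=
    hs0.const_mul 2
  have hden0 : (2*Real.sqrt (q 0)) ≠ 0 := by positivity
  have hr : HasDerivAt (fun t => (2*b + 2*t)/(2*Real.sqrt (q t)))
      ((2 * (2*Real.sqrt (q 0)) - (2*b+2*0) * (2*(1/(2*c)*(2*b)))) / (2*Real.sqrt (q 0))^2)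
      0 := hnum.div hden hden0
  have hφ0 : HasDerivAt φ (φ' 0) 0 := key 0 (by rw [hq0]; positivity)
  have hprod : HasDerivAt φ'
      (-(a * ((2 * (2*Real.sqrt (q 0)) - (2*b+2*0) * (2*(1/(2*c)*(2*b)))) / (2*Real.sqrt (q 0))^2)) * φ 0
        + -(a * ((2*b + 2*0)/(2*Real.sqrt (q 0)))) * φ' 0) 0 :=
    ((hr.const_mul a).neg).mul hφ0
  refine ⟨hφdiff, ?_, ?_⟩
  · rw [hev.differentiableAt_iff]
    exact hprod.differentiableAt
  · rw [hev.deriv_eq, hprod.deriv]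
    simp only [hφ'def, hφdef, hsq0]
    field_simp
    ring

variable {E : Type*} [NormedAddCommGroup E] [NormedSpace ℝ E]

lemma line_second_deriv (f : E → ℝ) (hf : ContDiff ℝ 2 f) (x e : E) :
    (∀ t : ℝ, DifferentiableAt ℝ (fun s : ℝ => f (x + s • e)) t) ∧
    DifferentiableAt ℝ (deriv (fun s : ℝ => f (x + s • e))) 0 ∧
    deriv (deriv (fun s : ℝ => f (x + s • e))) 0 = iteratedFDeriv ℝ 2 f x ![e, e] := by
  have hline : ∀ t : ℝ, HasDerivAt (fun s : ℝ => x + s • e) e t := by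
    intro t
    simpa using ((hasDerivAt_id t).smul_const e).const_add x
  have hfd : ∀ t : ℝ, HasDerivAt (fun s : ℝ => f (x + s • e)) (fderiv ℝ f (x + t • e) e) t := by
    intro t
    exact ((hf.differentiable (by norm_num)).differentiableAt.hasFDerivAt).comp_hasDerivAt t (hline t)
  have hderiv : deriv (fun s : ℝ => f (x + s • e)) = fun t => fderiv ℝ f (x + t • e) e :=
    funext fun t => (hfd t).deriv
  have hf' : ContDiff ℝ 1 (fderiv ℝ f) := hf.fderiv_right (le_refl _)
  have hfd2 : HasFDerivAt (fderiv ℝ f) (fderiv ℝ (fderiv ℝ f) (x + (0:ℝ) • e)) (x + (0:ℝ) • e) :=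
    ((hf'.differentiable (by norm_num)).differentiableAt).hasFDerivAt
  have hcomp : HasDerivAt (fun t : ℝ => fderiv ℝ f (x + t • e)) (fderiv ℝ (fderiv ℝ f) x e) 0 := by
    have := hfd2.comp_hasDerivAt 0 (hline 0)
    simpa [Function.comp_def] using this
  have happ : HasDerivAt (fun t : ℝ => fderiv ℝ f (x + t • e) e)
      ((fderiv ℝ (fderiv ℝ f) x e) e) 0 := by
    have L := (ContinuousLinearMap.apply ℝ ℝ e).hasFDerivAt.comp_hasDerivAt 0 hcomp
    simpa [Function.comp_def] using L
  refine ⟨fun t => (hfd t).differentiableAt, ?_, ?_⟩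
  · rw [hderiv]; exact happ.differentiableAt
  · rw [hderiv, happ.deriv, iteratedFDeriv_two_apply]
    simp

end Helpers

/-- The Laplacian of a real-valued function on `ℝ²`, expressed as the sum of the
second directional derivatives along the standard basis directions. -/
noncomputable def laplacian (w : EuclideanSpace ℝ (Fin 2) → ℝ)
    (x : EuclideanSpace ℝ (Fin 2)) : ℝ :=
  ∑ i : Fin 2,
    iteratedFDeriv ℝ 2 w x ![EuclideanSpace.single i (1 : ℝ), EuclideanSpace.single i (1 : ℝ)]

set_option maxHeartbeats 2000000 in
theorem exponential_decay_from_elliptic_inequality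
    (w : EuclideanSpace ℝ (Fin 2) → ℝ) (μ R : ℝ)
    (hμ : 0 < μ) (hR : 0 < R)
    (hw : ContDiff ℝ 2 w) (hnonneg : ∀ x, 0 ≤ w x)
    (hdecay : Filter.Tendsto w (Filter.cocompact _) (nhds 0))
    (hineq : ∀ x, R < ‖x‖ → μ * w x ≤ laplacian w x) :
    ∀ ε ∈ Set.Ioo (0 : ℝ) 1, ∃ C : ℝ, 0 < C ∧
      ∀ x : EuclideanSpace ℝ (Fin 2), R < ‖x‖ →
        w x ≤ C * Real.exp (-(Real.sqrt μ) * (1 - ε) * ‖x‖) := by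
  intro ε hε
  set a : ℝ := Real.sqrt μ * (1 - ε) with ha
  have hsqμ : 0 < Real.sqrt μ := Real.sqrt_pos.mpr hμ
  have ha0 : 0 < a := mul_pos hsqμ (by linarith [hε.2])
  have ha2 : a^2 < μ := by
    have hμa : a^2 = μ * (1-ε)^2 := by
      rw [ha, mul_pow, Real.sq_sqrt hμ.le]
    have h1 : (1-ε)^2 < 1 := by nlinarith [hε.1, hε.2]
    calc a^2 = μ * (1-ε)^2 := hμa
      _ < μ * 1 := by nlinarith
      _ = μ := mul_one μ
  obtain ⟨z, hz, hzmax⟩ := (isCompact_closedBall (0:EuclideanSpace ℝ (Fin 2)) R).exists_isMaxOn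
    ⟨0, Metric.mem_closedBall_self hR.le⟩ hw.continuous.continuousOn
  set M := w z with hM
  set C := (M + 1) * Real.exp (a * R) with hC
  have hM0 : 0 ≤ M := hnonneg z
  have hCpos : 0 < C := by positivity
  refine ⟨C, hCpos, ?_⟩
  intro x hx
  have hgoal : -(Real.sqrt μ) * (1 - ε) * ‖x‖ = -(a * ‖x‖) := by rw [ha]; ring
  rw [hgoal]
  by_contra hcon
  push_neg at hcon
  set u : EuclideanSpace ℝ (Fin 2) → ℝ := fun z => w z - C * Real.exp (-(a * ‖z‖)) with hu
  have hucont : Continuous u :=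
    hw.continuous.sub (continuous_const.mul
      (Real.continuous_exp.comp ((continuous_const.mul continuous_norm).neg)))
  set m := u x with hm
  have hm0 : 0 < m := by
    rw [hm, hu]; simp only; linarith
  have hcocompact : ∀ᶠ z in Filter.cocompact _, w z < m := hdecay.eventually_lt_const hm0
  obtain ⟨K₀, hK₀c, hK₀⟩ := Filter.mem_cocompact.mp hcocompact
  set T := {z : EuclideanSpace ℝ (Fin 2) | R ≤ ‖z‖ ∧ m ≤ u z} with hT
  have hTsub : T ⊆ K₀ := by
    intro z hzT
    by_contra hzK
    have h1 : w z < m := hK₀ hzK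
    have h2 : u z ≤ w z := by
      rw [hu]; simp only
      have := mul_pos hCpos (Real.exp_pos (-(a*‖z‖)))
      linarith
    have := hzT.2
    linarith
  have hTclosed : IsClosed T :=
    (isClosed_le continuous_const continuous_norm).inter (isClosed_le continuous_const hucont)
  have hTcompact : IsCompact T := hK₀c.of_isClosed_subset hTclosed hTsub
  have hxT : x ∈ T := ⟨hx.le, le_refl m⟩
  obtain ⟨x₀, hx₀T, hx₀max⟩ := hTcompact.exists_isMaxOn ⟨x, hxT⟩ hucont.continuousOn
  have hglobal : ∀ z, R ≤ ‖z‖ → u z ≤ u x₀ := by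
    intro z hz
    by_cases hzm : m ≤ u z
    · exact hx₀max ⟨hz, hzm⟩
    · push_neg at hzm
      linarith [hx₀T.2]
  have hux₀ : 0 < u x₀ := lt_of_lt_of_le hm0 hx₀T.2
  have hexpRR : Real.exp (a*R) * Real.exp (-(a*R)) = 1 := by
    rw [← Real.exp_add]; simp
  have hx₀R : R < ‖x₀‖ := by
    rcases lt_or_eq_of_le hx₀T.1 with h | h
    · exact h
    · exfalso
      have hwz : w x₀ ≤ M := hzmax (by
        simp only [Metric.mem_closedBall, dist_zero_right]
        exact le_of_eq h.symm)
      have hux : u x₀ = w x₀ - C * Real.exp (-(a*R)) := by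
        rw [hu]; simp only; rw [← h]
      rw [hux, hC] at hux₀
      nlinarith [hux₀, hexpRR]
  have hlocal : IsLocalMax u x₀ := by
    have hev : ∀ᶠ z in nhds x₀, R < ‖z‖ :=
      continuous_norm.continuousAt.eventually (eventually_gt_nhds hx₀R)
    exact hev.mono fun z hz => hglobal z hz.le
  set c : ℝ := ‖x₀‖ with hcdef
  have hc : 0 < c := lt_trans hR hx₀R
  have hwx₀ : C * Real.exp (-(a*c)) < w x₀ := by
    have : u x₀ = w x₀ - C * Real.exp (-(a*c)) := by rw [hu]
    linarith [hux₀, this ▸ hux₀]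
  -- components
  have hsum : (x₀ 0)^2 + (x₀ 1)^2 = c^2 := by
    have h1 : (inner ℝ x₀ x₀ : ℝ) = ‖x₀‖^2 := real_inner_self_eq_norm_sq x₀
    rw [PiLp.inner_apply] at h1
    simp only [RCLike.inner_apply, starRingEnd_apply, star_trivial] at h1
    rw [Fin.sum_univ_two] at h1
    nlinarith [h1]
  have hnormline : ∀ (i : Fin 2) (t : ℝ),
      ‖x₀ + t • EuclideanSpace.single i (1:ℝ)‖ = Real.sqrt (c^2 + 2*(x₀ i)*t + t^2) := by
    intro i t
    have he1 : ‖EuclideanSpace.single i (1:ℝ)‖ = 1 := by simp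
    have hbi : (inner ℝ x₀ (EuclideanSpace.single i (1:ℝ)) : ℝ) = x₀ i := by
      simpa using EuclideanSpace.inner_single_right i (1:ℝ) x₀
    have h1 : ‖x₀ + t • EuclideanSpace.single i (1:ℝ)‖^2 = c^2 + 2*(x₀ i)*t + t^2 := by
      rw [norm_add_sq_real, real_inner_smul_right, hbi, norm_smul, he1]
      simp [Real.norm_eq_abs, sq_abs]
      ring
    rw [← h1, Real.sqrt_sq (norm_nonneg _)]
  have hkey : ∀ i : Fin 2,
      iteratedFDeriv ℝ 2 w x₀ ![EuclideanSpace.single i (1:ℝ), EuclideanSpace.single i (1:ℝ)]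
      ≤ C * ((a^2 * (x₀ i)^2 / c^2 - a * (c^2 - (x₀ i)^2) / c^3) * Real.exp (-(a*c))) := by
    intro i
    obtain ⟨hWd, hWd2, hWval⟩ := line_second_deriv w hw x₀ (EuclideanSpace.single i (1:ℝ))
    obtain ⟨hPd, hPd2, hPval⟩ := phi_second_deriv a (x₀ i) c hc
    set gW : ℝ → ℝ := fun t => w (x₀ + t • EuclideanSpace.single i (1:ℝ)) with hgW
    set φ : ℝ → ℝ := fun t => Real.exp (-(a * Real.sqrt (c^2 + 2*(x₀ i)*t + t^2))) with hφ
    set g : ℝ → ℝ := fun t => gW t - C * φ t with hg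
    have hgu : g = fun t => u (x₀ + t • EuclideanSpace.single i (1:ℝ)) := by
      funext t
      rw [hg, hu]
      simp only [hgW, hφ]
      rw [hnormline i t]
    have hgmax : IsLocalMax g 0 := by
      rw [hgu]
      have h0 : x₀ + (0:ℝ) • EuclideanSpace.single i (1:ℝ) = x₀ := by simp
      have hcont : ContinuousAt (fun t : ℝ => x₀ + t • EuclideanSpace.single i (1:ℝ)) 0 := by
        fun_prop
      exact IsLocalMax.comp_continuous (by rw [h0]; exact hlocal) hcont
    have hgdiff : ∀ᶠ t in nhds (0:ℝ), DifferentiableAt ℝ g t :=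
      hPd.mono fun t ht => (hWd t).sub (ht.const_mul C)
    have hgderiv : deriv g =ᶠ[nhds (0:ℝ)] fun t => deriv gW t - C * deriv φ t := by
      filter_upwards [hPd] with t ht
      rw [hg]
      rw [deriv_fun_sub (hWd t) (ht.const_mul C), deriv_const_mul C ht]
    have hgd2 : DifferentiableAt ℝ (deriv g) 0 := by
      rw [hgderiv.differentiableAt_iff]
      exact hWd2.sub (hPd2.const_mul C)
    have hval : deriv (deriv g) 0 =
        iteratedFDeriv ℝ 2 w x₀ ![EuclideanSpace.single i (1:ℝ), EuclideanSpace.single i (1:ℝ)]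
        - C * ((a^2 * (x₀ i)^2 / c^2 - a * (c^2 - (x₀ i)^2) / c^3) * Real.exp (-(a*c))) := by
      rw [hgderiv.deriv_eq, deriv_fun_sub hWd2 (hPd2.const_mul C), deriv_const_mul C hPd2,
        hWval, hPval]
    have hle := second_deriv_nonpos_of_isLocalMax hgdiff hgd2 hgmax
    rw [hval] at hle
    linarith
  have hE := Real.exp_pos (-(a*c))
  have hlap : laplacian w x₀ ≤ C * (a^2 - a/c) * Real.exp (-(a*c)) := by
    have h0 := hkey 0
    have h1 := hkey 1
    have hcalc : (a^2 * (x₀ 0)^2 / c^2 - a * (c^2 - (x₀ 0)^2) / c^3)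
        + (a^2 * (x₀ 1)^2 / c^2 - a * (c^2 - (x₀ 1)^2) / c^3) = a^2 - a/c := by
      have h2 : (x₀ 1)^2 = c^2 - (x₀ 0)^2 := by linarith
      have hc' : c ≠ 0 := ne_of_gt hc
      rw [h2]
      field_simp
      ring
    have hsum2 : laplacian w x₀ =
        iteratedFDeriv ℝ 2 w x₀ ![EuclideanSpace.single 0 (1:ℝ), EuclideanSpace.single 0 (1:ℝ)]
        + iteratedFDeriv ℝ 2 w x₀ ![EuclideanSpace.single 1 (1:ℝ), EuclideanSpace.single 1 (1:ℝ)] := by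
      rw [laplacian, Fin.sum_univ_two]
    have heq : C * ((a^2 * (x₀ 0)^2 / c^2 - a * (c^2 - (x₀ 0)^2) / c^3) * Real.exp (-(a*c)))
        + C * ((a^2 * (x₀ 1)^2 / c^2 - a * (c^2 - (x₀ 1)^2) / c^3) * Real.exp (-(a*c)))
        = C * (a^2 - a/c) * Real.exp (-(a*c)) := by
      rw [← hcalc]; ring
    rw [hsum2]
    linarith
  have hμw := hineq x₀ hx₀R
  have hac : 0 < a / c := div_pos ha0 hc
  clear_value a C c
  have hCE : 0 < C * Real.exp (-(a*c)) := mul_pos hCpos hE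
  have hstep1 : C * (a^2 - a/c) * Real.exp (-(a*c)) ≤ C * a^2 * Real.exp (-(a*c)) := by
    have hq : 0 ≤ C * (a/c) * Real.exp (-(a*c)) :=
      le_of_lt (mul_pos (mul_pos hCpos hac) hE)
    have he : C * (a^2 - a/c) * Real.exp (-(a*c))
        = C * a^2 * Real.exp (-(a*c)) - C * (a/c) * Real.exp (-(a*c)) := by ring
    linarith
  have hstep2 : C * a^2 * Real.exp (-(a*c)) < C * μ * Real.exp (-(a*c)) := by
    have h := mul_lt_mul_of_pos_left ha2 hCE
    have e1 : C * a^2 * Real.exp (-(a*c)) = (C * Real.exp (-(a*c))) * a^2 := by ring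
    have e2 : C * μ * Real.exp (-(a*c)) = (C * Real.exp (-(a*c))) * μ := by ring
    linarith
  have hstep3 : C * μ * Real.exp (-(a*c)) < μ * w x₀ := by
    have h := mul_lt_mul_of_pos_left hwx₀ hμ
    have e1 : C * μ * Real.exp (-(a*c)) = μ * (C * Real.exp (-(a*c))) := by ring
    linarith
  linarith
end
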